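/- arXiv:2407.14163 — 3 statements merged into one kernel-verified Lean document; each statement's English description precedes it below -/
import Mathlib

section
/- Let {|Ψ_k⟩}_{k=0}^{N-1} be unit vectors in a finite-dimensional Hilbert space that are linearly independent and pairwise nonorthogonal, and let U, V be unitaries. If |⟨Ψ_k| V† U |Ψ_k⟩| = 1 for every k, then there exists a single phase e^{iφ} such that U|ψ⟩ = e^{iφ} V|ψ⟩ for every |ψ⟩ in the span of the |Ψ_k⟩. -/
open scoped InnerProductSpace ComplexConjugate

/-!
Put `W = V⁻¹ U`. A fidelity `|⟨Ψ_k, W Ψ_k⟩| = 1` is the equality case of Cauchy–Schwarz, so each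
`Ψ_k` is an eigenvector of `W` with a unimodular eigenvalue `c_k`. Since `W` preserves inner
products, `⟨Ψ_k, Ψ_k'⟩ = conj c_k · c_k' · ⟨Ψ_k, Ψ_k'⟩`, and nonorthogonality forces
`c_k' = c_k`. Hence `W` acts on the span as one scalar `c = e^{iφ}`.
-/

namespace LinearIsometry

variable {𝕜 E : Type*} [RCLike 𝕜] [NormedAddCommGroup E] [InnerProductSpace 𝕜 E]

theorem map_eq_inner_smul_of_norm_inner_eq_one (W : E →ₗᵢ[𝕜] E) {x : E} (hx : ‖x‖ = 1)
    (h : ‖⟪x, W x⟫_𝕜‖ = 1) : W x = ⟪x, W x⟫_𝕜 • x := by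
  have hx₀ : x ≠ 0 := norm_ne_zero_iff.mp (by rw [hx]; exact one_ne_zero)
  have hWx₀ : W x ≠ 0 := norm_ne_zero_iff.mp (by rw [W.norm_map, hx]; exact one_ne_zero)
  obtain ⟨r, -, hr⟩ := (norm_inner_eq_norm_iff hx₀ hWx₀).mp (by rw [h, W.norm_map, hx, one_mul])
  rw [hr, inner_smul_right, inner_self_eq_norm_sq_to_K, hx]
  simp

theorem eigenvalue_eq_of_inner_ne_zero (W : E →ₗᵢ[𝕜] E) {x y : E} {a b : 𝕜} (ha : ‖a‖ = 1)
    (hx : W x = a • x) (hy : W y = b • y) (hxy : ⟪x, y⟫_𝕜 ≠ 0) : a = b := by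
  have hab : conj a * b = 1 := by
    have h := W.inner_map_map x y
    rw [hx, hy, inner_smul_left, inner_smul_right, ← mul_assoc] at h
    exact (mul_eq_right₀ hxy).mp h
  have haa : conj a * a = 1 := by rw [RCLike.conj_mul, ha]; simp
  have hconj : conj a ≠ 0 := fun h => by simp [h] at haa
  exact mul_left_cancel₀ hconj (haa.trans hab.symm)

theorem exists_eqOn_span_smul_of_norm_inner_eq_one {ι : Type*} (W : E →ₗᵢ[𝕜] E) (Ψ : ι → E)
    (hunit : ∀ k, ‖Ψ k‖ = 1) (hno : ∀ k k', ⟪Ψ k, Ψ k'⟫_𝕜 ≠ 0)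
    (hfid : ∀ k, ‖⟪Ψ k, W (Ψ k)⟫_𝕜‖ = 1) :
    ∃ c : 𝕜, ‖c‖ = 1 ∧ ∀ ψ ∈ Submodule.span 𝕜 (Set.range Ψ), W ψ = c • ψ := by
  rcases isEmpty_or_nonempty ι with hι | ⟨⟨k₀⟩⟩
  · refine ⟨1, norm_one, fun ψ hψ => ?_⟩
    rw [Set.range_eq_empty, Submodule.span_empty, Submodule.mem_bot] at hψ
    simp [hψ]
  have heigen k : W (Ψ k) = ⟪Ψ k, W (Ψ k)⟫_𝕜 • Ψ k :=
    W.map_eq_inner_smul_of_norm_inner_eq_one (hunit k) (hfid k)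
  refine ⟨_, hfid k₀, fun ψ hψ => ?_⟩
  refine LinearMap.eqOn_span (f := W.toLinearMap) (g := ⟪Ψ k₀, W (Ψ k₀)⟫_𝕜 • LinearMap.id)
    ?_ hψ
  rintro _ ⟨k, rfl⟩
  rw [LinearMap.smul_apply, LinearMap.id_apply, coe_toLinearMap, heigen k,
    W.eigenvalue_eq_of_inner_ne_zero (hfid k₀) (heigen k₀) (heigen k) (hno k₀ k)]

end LinearIsometry

theorem subspace_phase_agreement_general
    {E : Type*} [NormedAddCommGroup E] [InnerProductSpace ℂ E]
    (N : ℕ) (Ψ : Fin N → E)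
    (hunit : ∀ k, ‖Ψ k‖ = 1)
    (hno : ∀ k k', ⟪Ψ k, Ψ k'⟫_ℂ ≠ 0)
    (U V : E ≃ₗᵢ[ℂ] E)
    (hfid : ∀ k, ‖⟪Ψ k, V.symm (U (Ψ k))⟫_ℂ‖ = 1) :
    ∃ φ : ℝ, ∀ ψ ∈ Submodule.span ℂ (Set.range Ψ),
      U ψ = Complex.exp (Complex.I * φ) • V ψ := by
  obtain ⟨c, hc, hW⟩ := (U.trans V.symm).toLinearIsometry.exists_eqOn_span_smul_of_norm_inner_eq_one
    Ψ hunit hno hfid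
  have hphase : Complex.exp (Complex.I * c.arg) = c := by
    simpa [hc, mul_comm] using Complex.norm_mul_exp_arg_mul_I c
  refine ⟨c.arg, fun ψ hψ => ?_⟩
  rw [hphase, ← V.apply_symm_apply (U ψ), ← map_smul]
  exact congrArg V (hW ψ hψ)

/-- Faithfulness of the Loschmidt-echo cost: if all per-state fidelities equal 1
for a linearly independent, pairwise nonorthogonal family of unit vectors, then
`U` and `V` agree on the span up to a single global phase. -/
theorem subspace_phase_agreement
    {E : Type*} [NormedAddCommGroup E] [InnerProductSpace ℂ E] [FiniteDimensional ℂ E]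
    (N : ℕ) (Ψ : Fin N → E)
    (hunit : ∀ k, ‖Ψ k‖ = 1)
    (hli : LinearIndependent ℂ Ψ)
    (hno : ∀ k k', ⟪Ψ k, Ψ k'⟫_ℂ ≠ 0)
    (U V : E ≃ₗᵢ[ℂ] E)
    (hfid : ∀ k, ‖⟪Ψ k, V.symm (U (Ψ k))⟫_ℂ‖ = 1) :
    ∃ φ : ℝ, ∀ ψ ∈ Submodule.span ℂ (Set.range Ψ),
      U ψ = Complex.exp (Complex.I * φ) • V ψ :=
  subspace_phase_agreement_general N Ψ hunit hno U V hfid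
end

section
/- With the global cost C_LET = 1 - (1/N)∑_k |⟨Ψ_k| V† U |Ψ_k⟩|², we have C_LET = 0 if and only if U|ψ⟩ = e^{iφ} V|ψ⟩ for some common phase φ and all |ψ⟩ in span{|Ψ_k⟩}, assuming the |Ψ_k⟩ are linearly independent, pairwise nonorthogonal unit vectors. -/
/-!
Write `W = V⁻¹U`. By Cauchy–Schwarz each `|⟨Ψ_k|W|Ψ_k⟩|²` is at most `1`, so the cost vanishes
iff every term equals `1`, i.e. iff every `Ψ_k` is an eigenvector of `W` with a unimodular
eigenvalue `c_k`. Unitarity gives `⟨Ψ_k|Ψ_l⟩ = c̄_k c_l ⟨Ψ_k|Ψ_l⟩`, so nonorthogonality forces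
all `c_k` to agree, and then `W` is this scalar on the whole span.
-/

open scoped InnerProductSpace ComplexConjugate

theorem one_sub_mean_eq_zero_iff {ι : Type*} [Fintype ι] [Nonempty ι] {f : ι → ℝ}
    (hf : ∀ i, f i ≤ 1) :
    1 - (1 / (Fintype.card ι : ℝ)) * ∑ i, f i = 0 ↔ ∀ i, f i = 1 := by
  have hcard : (Fintype.card ι : ℝ) ≠ 0 := Nat.cast_ne_zero.mpr Fintype.card_ne_zero
  calc 1 - (1 / (Fintype.card ι : ℝ)) * ∑ i, f i = 0 ↔ ∑ i, f i = ∑ _i : ι, (1 : ℝ) := by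
        rw [Finset.sum_const, Finset.card_univ, nsmul_one, sub_eq_zero, eq_comm,
          one_div_mul_eq_div, div_eq_one_iff_eq hcard]
    _ ↔ ∀ i, f i = 1 := (Finset.sum_eq_sum_iff_of_le fun i _ => hf i).trans (by simp)

section
variable {𝕜 E : Type*} [RCLike 𝕜] [NormedAddCommGroup E] [InnerProductSpace 𝕜 E]

theorem LinearIsometry.norm_inner_map_self_le_one (W : E →ₗᵢ[𝕜] E) {x : E} (hx : ‖x‖ = 1) :
    ‖⟪x, W x⟫_𝕜‖ ≤ 1 := by
  simpa [hx] using norm_inner_le_norm (𝕜 := 𝕜) x (W x)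

theorem LinearIsometry.norm_inner_map_self_eq_one_iff (W : E →ₗᵢ[𝕜] E) {x : E} (hx : ‖x‖ = 1) :
    ‖⟪x, W x⟫_𝕜‖ = 1 ↔ ∃ c : 𝕜, ‖c‖ = 1 ∧ W x = c • x := by
  have hx₀ : x ≠ 0 := norm_ne_zero_iff.mp (by simp [hx])
  have hWx₀ : W x ≠ 0 := norm_ne_zero_iff.mp (by simp [hx])
  have cauchy_schwarz_eq := norm_inner_eq_norm_iff (𝕜 := 𝕜) hx₀ hWx₀
  rw [W.norm_map, hx, one_mul] at cauchy_schwarz_eq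
  rw [cauchy_schwarz_eq]
  constructor
  · rintro ⟨c, -, hc⟩
    refine ⟨c, ?_, hc⟩
    simpa [hc, norm_smul, hx] using W.norm_map x
  · rintro ⟨c, hc, hWx⟩
    exact ⟨c, by rintro rfl; simp at hc, hWx⟩

theorem LinearIsometry.eq_of_map_eq_smul_of_inner_ne_zero (W : E →ₗᵢ[𝕜] E) {x y : E} {a b : 𝕜}
    (hxy : ⟪x, y⟫_𝕜 ≠ 0) (ha : ‖a‖ = 1) (hWx : W x = a • x) (hWy : W y = b • y) : a = b := by
  have hab : conj a * b = 1 := by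
    have h := W.inner_map_map x y
    rw [hWx, hWy, inner_smul_left, inner_smul_right, ← mul_assoc] at h
    exact (mul_eq_right₀ hxy).mp h
  have haa : conj a * a = 1 := by simp [RCLike.conj_mul, ha]
  calc a = a * (conj a * b) := by rw [hab, mul_one]
    _ = (conj a * a) * b := by ring
    _ = b := by rw [haa, one_mul]

theorem LinearIsometry.forall_norm_inner_map_self_eq_one_iff {ι : Type*} [Nonempty ι]
    (W : E →ₗᵢ[𝕜] E) {Ψ : ι → E} (hunit : ∀ k, ‖Ψ k‖ = 1) (hno : ∀ k k', ⟪Ψ k, Ψ k'⟫_𝕜 ≠ 0) :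
    (∀ k, ‖⟪Ψ k, W (Ψ k)⟫_𝕜‖ = 1) ↔
      ∃ c : 𝕜, ‖c‖ = 1 ∧ ∀ ψ ∈ Submodule.span 𝕜 (Set.range Ψ), W ψ = c • ψ := by
  simp_rw [W.norm_inner_map_self_eq_one_iff (hunit _)]
  constructor
  · intro h
    choose c hc hWc using h
    obtain ⟨k₀⟩ := ‹Nonempty ι›
    have hconst (k : ι) : c k = c k₀ :=
      W.eq_of_map_eq_smul_of_inner_ne_zero (hno k k₀) (hc k) (hWc k) (hWc k₀)
    have hgen : Set.EqOn W.toLinearMap ⇑(c k₀ • LinearMap.id : E →ₗ[𝕜] E) (Set.range Ψ) := by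
      rintro _ ⟨k, rfl⟩
      simp [hWc k, hconst k]
    exact ⟨c k₀, hc k₀, fun ψ hψ => LinearMap.eqOn_span' hgen hψ⟩
  · rintro ⟨c, hc, hW⟩ k
    exact ⟨c, hc, hW _ (Submodule.subset_span ⟨k, rfl⟩)⟩

end

theorem cost_LET_faithful_general
    {E : Type*} [NormedAddCommGroup E] [InnerProductSpace ℂ E]
    (N : ℕ) (hN : 0 < N) (Ψ : Fin N → E)
    (hunit : ∀ k, ‖Ψ k‖ = 1)
    (hno : ∀ k k', ⟪Ψ k, Ψ k'⟫_ℂ ≠ 0)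
    (U V : E ≃ₗᵢ[ℂ] E) :
    1 - (1 / (N : ℝ)) * ∑ k : Fin N, ‖⟪Ψ k, V.symm (U (Ψ k))⟫_ℂ‖ ^ 2 = 0 ↔
      ∃ φ : ℝ, ∀ ψ ∈ Submodule.span ℂ (Set.range Ψ),
        U ψ = Complex.exp (Complex.I * φ) • V ψ := by
  have : Nonempty (Fin N) := ⟨⟨0, hN⟩⟩
  let W := (U.trans V.symm).toLinearIsometry
  have hW (x : E) : V.symm (U x) = W x := rfl
  have h_le (k : Fin N) : ‖⟪Ψ k, W (Ψ k)⟫_ℂ‖ ^ 2 ≤ 1 :=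
    pow_le_one₀ (norm_nonneg _) (W.norm_inner_map_self_le_one (hunit k))
  have h_mean := one_sub_mean_eq_zero_iff h_le
  rw [Fintype.card_fin] at h_mean
  simp_rw [hW, h_mean, pow_eq_one_iff_of_nonneg (norm_nonneg _) two_ne_zero,
    W.forall_norm_inner_map_self_eq_one_iff hunit hno, ← hW, LinearIsometryEquiv.symm_apply_eq,
    map_smul]
  simp_rw [Complex.norm_eq_one_iff, exists_exists_eq_and, mul_comm]

/-- The global Loschmidt-echo cost `C_LET = 1 - (1/N)∑_k |⟨Ψ_k|V†U|Ψ_k⟩|²`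
vanishes iff `U` and `V` agree on the span of the `Ψ_k` up to a common phase,
for linearly independent, pairwise nonorthogonal unit vectors. -/
theorem cost_LET_faithful
    {E : Type*} [NormedAddCommGroup E] [InnerProductSpace ℂ E] [FiniteDimensional ℂ E]
    (N : ℕ) (hN : 0 < N) (Ψ : Fin N → E)
    (hunit : ∀ k, ‖Ψ k‖ = 1)
    (hli : LinearIndependent ℂ Ψ)
    (hno : ∀ k k', ⟪Ψ k, Ψ k'⟫_ℂ ≠ 0)
    (U V : E ≃ₗᵢ[ℂ] E) :
    1 - (1 / (N : ℝ)) * ∑ k : Fin N, ‖⟪Ψ k, V.symm (U (Ψ k))⟫_ℂ‖ ^ 2 = 0 ↔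
      ∃ φ : ℝ, ∀ ψ ∈ Submodule.span ℂ (Set.range Ψ),
        U ψ = Complex.exp (Complex.I * φ) • V ψ :=
  cost_LET_faithful_general N hN Ψ hunit hno U V
end

section
/- Let H = H_A + H_B with H_A, H_B Hermitian. Then ‖e^{−itH} − (e^{−i(t/r)H_A} e^{−i(t/r)H_B})^r‖ ≤ (t²/(2r)) ‖[H_A, H_B]‖. -/
set_option synthInstance.maxHeartbeats 1000000
set_option maxHeartbeats 1000000

open NormedSpace Complex

noncomputable instance instNormedAlgebraRatCLMTrotter {E : Type*} [NormedAddCommGroup E]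
    [InnerProductSpace ℂ E] : NormedAlgebra ℚ (E →L[ℂ] E) :=
  NormedAlgebra.restrictScalars ℚ ℂ _

section TrotterAux

variable {E : Type*} [NormedAddCommGroup E] [InnerProductSpace ℂ E] [FiniteDimensional ℂ E]

/-- `W A s = e^{-i s A}` written as `exp ((s:ℂ) • ((-I) • A))`. -/
noncomputable def Wop (A : E →L[ℂ] E) (s : ℝ) : E →L[ℂ] E :=
  NormedSpace.exp ((s : ℂ) • ((-Complex.I) • A))

lemma Wop_eq (A : E →L[ℂ] E) (s : ℝ) :
    Wop A s = NormedSpace.exp ((-(Complex.I * s)) • A) := by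
  rw [Wop, smul_smul]; congr 1; ring_nf

lemma Wop_zero (A : E →L[ℂ] E) : Wop A 0 = 1 := by
  simp [Wop, NormedSpace.exp_zero]

lemma Wop_mem_unitary {A : E →L[ℂ] E} (hA : IsSelfAdjoint A) (s : ℝ) :
    Wop A s ∈ unitary (E →L[ℂ] E) := by
  apply NormedSpace.exp_mem_unitary_of_mem_skewAdjoint
  rw [skewAdjoint.mem_iff, star_smul, star_smul, hA.star_eq, smul_smul, smul_smul, ← neg_smul]
  congr 1
  simp [Complex.star_def, Complex.conj_ofReal]

set_option synthInstance.maxHeartbeats 1000000 in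
lemma norm_Wop_le_one {A : E →L[ℂ] E} (hA : IsSelfAdjoint A) (s : ℝ) :
    ‖Wop A s‖ ≤ 1 := by
  rcases subsingleton_or_nontrivial E with hE | hE
  · have : Wop A s = 0 := Subsingleton.elim _ _
    simp [this]
  · haveI : Nontrivial (E →L[ℂ] E) := by
      refine nontrivial_of_ne 1 0 fun h => ?_
      obtain ⟨x, hx⟩ := exists_ne (0 : E)
      exact hx (by simpa using DFunLike.congr_fun h x)
    exact le_of_eq (CStarRing.norm_of_mem_unitary (Wop_mem_unitary hA s))

lemma Wop_hasDerivAt (A : E →L[ℂ] E) (s : ℝ) :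
    HasDerivAt (fun u : ℝ => Wop A u) (Wop A s * ((-Complex.I) • A)) s := by
  have h := hasDerivAt_exp_smul_const (𝕂 := ℂ) ((-Complex.I) • A) ((s : ℝ) : ℂ)
  have := h.scomp (x := s) Complex.ofRealCLM.hasDerivAt
  simpa [Wop, Function.comp_def] using this

lemma Wop_commute (A : E →L[ℂ] E) (s : ℝ) : Commute A (Wop A s) := by
  exact (((Commute.refl A).smul_right (-Complex.I)).smul_right ((s : ℂ))).exp_right

lemma Wop_continuous (A : E →L[ℂ] E) : Continuous (fun s : ℝ => Wop A s) := by
  exact NormedSpace.exp_continuous.comp (by continuity)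

end TrotterAux

section TrotterAux2

variable {E : Type*} [NormedAddCommGroup E] [InnerProductSpace ℂ E] [FiniteDimensional ℂ E]

lemma Wop_commute' (A : E →L[ℂ] E) (s : ℝ) :
    Wop A s * ((-Complex.I) • A) = ((-Complex.I) • A) * (Wop A s) := by
  rw [mul_smul_comm, smul_mul_assoc, ← (Wop_commute A s).eq]

lemma Wop_mul_neg (A : E →L[ℂ] E) (s : ℝ) : Wop A s * Wop A (-s) = 1 := by
  rw [Wop, Wop, ← NormedSpace.exp_add_of_commute
    (((Commute.refl _).smul_left _).smul_right _)]
  push_cast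
  rw [← add_smul, add_neg_cancel, zero_smul, NormedSpace.exp_zero]

end TrotterAux2


section TrotterAux3

variable {E : Type*} [NormedAddCommGroup E] [InnerProductSpace ℂ E] [FiniteDimensional ℂ E]

lemma comm_bound {A : E →L[ℂ] E} (hA : IsSelfAdjoint A) (B : E →L[ℂ] E)
    {s : ℝ} (hs : 0 ≤ s) :
    ‖Wop A s * B - B * Wop A s‖ ≤ s * ‖A * B - B * A‖ := by
  set M : E →L[ℂ] E := (-Complex.I) • A with hM
  set g : ℝ → (E →L[ℂ] E) := fun u => Wop A u * B * Wop A (s - u) with hg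
  set g' : ℝ → (E →L[ℂ] E) :=
    fun u => Wop A u * ((-Complex.I) • (A * B - B * A)) * Wop A (s - u) with hg'
  have hWcont := Wop_continuous (E := E) A
  have hderiv : ∀ u : ℝ, HasDerivAt g (g' u) u := by
    intro u
    have h2 : HasDerivAt (fun u : ℝ => Wop A (s - u))
        ((-1 : ℝ) • (Wop A (s - u) * M)) u :=
      (Wop_hasDerivAt A (s - u)).scomp u ((hasDerivAt_id u).const_sub s)
    have h1 : HasDerivAt (fun u : ℝ => Wop A u * B) (Wop A u * M * B) u :=
      (Wop_hasDerivAt A u).mul_const B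
    have h3 := h1.mul h2
    have key : (-Complex.I) • (A * B - B * A) = M * B - B * M := by
      rw [hM, smul_sub, smul_mul_assoc, mul_smul_comm]
    have hc : Wop A (s - u) * M = M * Wop A (s - u) := Wop_commute' A (s - u)
    refine h3.congr_deriv ?_
    symm
    simp only [hg', key, neg_one_smul]
    rw [hc]
    noncomm_ring
  have hcont' : Continuous g' := by
    apply Continuous.mul
    · exact (hWcont.mul continuous_const)
    · exact hWcont.comp (continuous_const.sub continuous_id)
  have hftc : ∫ u in (0:ℝ)..s, g' u = g s - g 0 :=
    intervalIntegral.integral_eq_sub_of_hasDerivAt (fun u _ => hderiv u)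
      (hcont'.intervalIntegrable 0 s)
  have hgs : g s = Wop A s * B := by simp [hg, Wop_zero]
  have hg0 : g 0 = B * Wop A s := by simp [hg, Wop_zero]
  have hbound : ∀ u ∈ Set.uIoc (0:ℝ) s, ‖g' u‖ ≤ ‖A * B - B * A‖ := by
    intro u hu
    calc ‖g' u‖ ≤ ‖Wop A u * ((-Complex.I) • (A * B - B * A))‖ * ‖Wop A (s - u)‖ :=
          norm_mul_le _ _
      _ ≤ (‖Wop A u‖ * ‖(-Complex.I) • (A * B - B * A)‖) * ‖Wop A (s - u)‖ :=
          mul_le_mul_of_nonneg_right (norm_mul_le _ _) (norm_nonneg _)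
      _ ≤ (1 * ‖(-Complex.I) • (A * B - B * A)‖) * 1 := by
          have h1 := norm_Wop_le_one hA u
          have h2 := norm_Wop_le_one hA (s - u)
          have h3 := norm_nonneg ((-Complex.I) • (A * B - B * A))
          have h5 := norm_nonneg (Wop A (s - u))
          exact mul_le_mul (mul_le_mul_of_nonneg_right h1 h3) h2 h5 (by positivity)
      _ = ‖A * B - B * A‖ := by
          rw [one_mul, mul_one, norm_smul (-Complex.I) (A * B - B * A), norm_neg, Complex.norm_I, one_mul]
  calc ‖Wop A s * B - B * Wop A s‖ = ‖∫ u in (0:ℝ)..s, g' u‖ := by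
        rw [hftc, hgs, hg0]
    _ ≤ ‖A * B - B * A‖ * |s - 0| :=
        intervalIntegral.norm_integral_le_of_norm_le_const hbound
    _ = s * ‖A * B - B * A‖ := by rw [sub_zero, _root_.abs_of_nonneg hs, mul_comm]

end TrotterAux3

section TrotterAux4

variable {E : Type*} [NormedAddCommGroup E] [InnerProductSpace ℂ E] [FiniteDimensional ℂ E]

lemma one_step {A B : E →L[ℂ] E} (hA : IsSelfAdjoint A) (hB : IsSelfAdjoint B)
    {τ : ℝ} (hτ : 0 ≤ τ) :
    ‖Wop (A + B) τ - Wop A τ * Wop B τ‖ ≤ τ ^ 2 / 2 * ‖A * B - B * A‖ := by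
  have hH : IsSelfAdjoint (A + B) := hA.add hB
  set MA : E →L[ℂ] E := (-Complex.I) • A with hMA
  set MB : E →L[ℂ] E := (-Complex.I) • B with hMB
  set h : ℝ → (E →L[ℂ] E) := fun s => Wop (A + B) (-s) * (Wop A s * Wop B s) with hh
  set h' : ℝ → (E →L[ℂ] E) :=
    fun s => Wop (A + B) (-s) * ((Wop A s * MB - MB * Wop A s) * Wop B s) with hh'
  have hderiv : ∀ s : ℝ, HasDerivAt h (h' s) s := by
    intro s
    have d0 : HasDerivAt (fun s : ℝ => Wop (A + B) (-s))
        ((-1 : ℝ) • (Wop (A + B) (-s) * ((-Complex.I) • (A + B)))) s :=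
      (Wop_hasDerivAt (A + B) (-s)).scomp s (hasDerivAt_neg s)
    have dAB := (Wop_hasDerivAt A s).mul (Wop_hasDerivAt B s)
    have h3 := d0.mul dAB
    have hsum : (-Complex.I) • (A + B) = MA + MB := by rw [hMA, hMB, smul_add]
    have hcH : Wop (A + B) (-s) * ((-Complex.I) • (A + B)) =
        ((-Complex.I) • (A + B)) * Wop (A + B) (-s) := Wop_commute' (A + B) (-s)
    have hcA : Wop A s * MA = MA * Wop A s := Wop_commute' A s
    have hcB : Wop B s * MB = MB * Wop B s := Wop_commute' B s
    simp only [Pi.mul_apply, ← hMA, ← hMB] at h3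
    refine h3.congr_deriv ?_
    symm
    simp only [hh', neg_one_smul, hcH, hsum, hcA, hcB]
    noncomm_ring
  have hWA := Wop_continuous (E := E) A
  have hWB := Wop_continuous (E := E) B
  have hWH := Wop_continuous (E := E) (A + B)
  have hcont' : Continuous h' := by
    apply Continuous.mul
    · exact hWH.comp continuous_neg
    · exact ((hWA.mul continuous_const).sub (continuous_const.mul hWA)).mul hWB
  have hftc : ∫ s in (0:ℝ)..τ, h' s = h τ - h 0 :=
    intervalIntegral.integral_eq_sub_of_hasDerivAt (fun s _ => hderiv s)
      (hcont'.intervalIntegrable 0 τ)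
  have hbound : ∀ᵐ s ∂(MeasureTheory.volume.restrict (Set.uIoc (0:ℝ) τ)),
      ‖h' s‖ ≤ s * ‖A * B - B * A‖ := by
    refine (MeasureTheory.ae_restrict_iff' measurableSet_uIoc).mpr
      (Filter.Eventually.of_forall fun s hs => ?_)
    rw [Set.uIoc_of_le hτ] at hs
    have hs0 : 0 ≤ s := hs.1.le
    have key : Wop A s * MB - MB * Wop A s =
        (-Complex.I) • (Wop A s * B - B * Wop A s) := by
      rw [hMB, smul_sub, smul_mul_assoc, mul_smul_comm]
    have hkeynorm : ‖Wop A s * MB - MB * Wop A s‖ = ‖Wop A s * B - B * Wop A s‖ := by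
      rw [key, norm_smul (-Complex.I) (Wop A s * B - B * Wop A s), norm_neg,
        Complex.norm_I, one_mul]
    calc ‖h' s‖ ≤ ‖Wop (A + B) (-s)‖ * ‖(Wop A s * MB - MB * Wop A s) * Wop B s‖ :=
          norm_mul_le _ _
      _ ≤ ‖Wop (A + B) (-s)‖ * (‖Wop A s * MB - MB * Wop A s‖ * ‖Wop B s‖) :=
          mul_le_mul_of_nonneg_left (norm_mul_le _ _) (norm_nonneg _)
      _ ≤ 1 * (‖Wop A s * B - B * Wop A s‖ * 1) := by
          rw [hkeynorm]
          exact mul_le_mul (norm_Wop_le_one hH (-s))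
            (mul_le_mul_of_nonneg_left (norm_Wop_le_one hB s) (norm_nonneg _))
            (by positivity) zero_le_one
      _ ≤ 1 * (s * ‖A * B - B * A‖ * 1) := by
          have := comm_bound hA B hs0
          nlinarith [norm_nonneg (A * B - B * A)]
      _ = s * ‖A * B - B * A‖ := by ring
  have hint : IntervalIntegrable (fun s : ℝ => s * ‖A * B - B * A‖)
      MeasureTheory.volume 0 τ :=
    (continuous_id.mul continuous_const).intervalIntegrable 0 τ
  have hnorm1 : ‖h τ - h 0‖ ≤ τ ^ 2 / 2 * ‖A * B - B * A‖ := by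
    rw [← hftc]
    calc ‖∫ s in (0:ℝ)..τ, h' s‖ ≤ |∫ s in (0:ℝ)..τ, s * ‖A * B - B * A‖| :=
          intervalIntegral.norm_integral_le_abs_of_norm_le hbound hint
      _ = τ ^ 2 / 2 * ‖A * B - B * A‖ := by
          rw [intervalIntegral.integral_mul_const, integral_id]
          have heq : (τ ^ 2 - 0 ^ 2) / 2 * ‖A * B - B * A‖ = τ ^ 2 / 2 * ‖A * B - B * A‖ := by
            ring
          rw [heq, _root_.abs_of_nonneg (by positivity)]
  have hid : Wop (A + B) τ - Wop A τ * Wop B τ = Wop (A + B) τ * (h 0 - h τ) := by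
    have h0 : h 0 = 1 := by simp [hh, Wop_zero]
    have hτ1 : Wop (A + B) τ * h τ = Wop A τ * Wop B τ := by
      rw [hh]
      simp only
      rw [← mul_assoc, Wop_mul_neg, one_mul]
    rw [mul_sub, h0, mul_one, hτ1]
  calc ‖Wop (A + B) τ - Wop A τ * Wop B τ‖ = ‖Wop (A + B) τ * (h 0 - h τ)‖ := by rw [hid]
    _ ≤ ‖Wop (A + B) τ‖ * ‖h 0 - h τ‖ := norm_mul_le _ _
    _ ≤ 1 * ‖h τ - h 0‖ := by
        rw [norm_sub_rev]
        exact mul_le_mul_of_nonneg_right (norm_Wop_le_one hH τ) (norm_nonneg _)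
    _ ≤ τ ^ 2 / 2 * ‖A * B - B * A‖ := by rw [one_mul]; exact hnorm1

end TrotterAux4

section TrotterAux5

variable {E : Type*} [NormedAddCommGroup E] [InnerProductSpace ℂ E] [FiniteDimensional ℂ E]

lemma norm_pow_le_one' {U : E →L[ℂ] E} (hU : ‖U‖ ≤ 1) (n : ℕ) : ‖U ^ n‖ ≤ 1 := by
  induction n with
  | zero => rw [pow_zero]; exact ContinuousLinearMap.norm_id_le
  | succ n ih =>
    rw [pow_succ]
    calc ‖U ^ n * U‖ ≤ ‖U ^ n‖ * ‖U‖ := norm_mul_le _ _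
      _ ≤ 1 * 1 := mul_le_mul ih hU (norm_nonneg _) zero_le_one
      _ = 1 := one_mul 1

lemma norm_pow_sub_pow_le' {U V : E →L[ℂ] E} (hU : ‖U‖ ≤ 1) (hV : ‖V‖ ≤ 1) (n : ℕ) :
    ‖U ^ n - V ^ n‖ ≤ n * ‖U - V‖ := by
  induction n with
  | zero => simp
  | succ n ih =>
    have hid : U ^ (n + 1) - V ^ (n + 1) = U ^ n * (U - V) + (U ^ n - V ^ n) * V := by
      noncomm_ring
    calc ‖U ^ (n + 1) - V ^ (n + 1)‖ ≤ ‖U ^ n * (U - V)‖ + ‖(U ^ n - V ^ n) * V‖ := by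
          rw [hid]; exact norm_add_le _ _
      _ ≤ ‖U ^ n‖ * ‖U - V‖ + ‖U ^ n - V ^ n‖ * ‖V‖ :=
          add_le_add (norm_mul_le _ _) (norm_mul_le _ _)
      _ ≤ 1 * ‖U - V‖ + (n * ‖U - V‖) * 1 := by
          refine add_le_add
            (mul_le_mul_of_nonneg_right (norm_pow_le_one' hU n) (norm_nonneg _))
            (mul_le_mul ih hV (norm_nonneg _) (by positivity))
      _ = (n + 1 : ℕ) * ‖U - V‖ := by push_cast; ring

lemma trotter_nonneg {A B : E →L[ℂ] E} (hA : IsSelfAdjoint A) (hB : IsSelfAdjoint B)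
    {t : ℝ} {r : ℕ} (hr : 0 < r) (ht : 0 ≤ t) :
    ‖Wop (A + B) t - (Wop A (t / r) * Wop B (t / r)) ^ r‖
      ≤ t ^ 2 / (2 * r) * ‖A * B - B * A‖ := by
  have hH : IsSelfAdjoint (A + B) := hA.add hB
  have hrR : (0 : ℝ) < r := Nat.cast_pos.mpr hr
  have hτ : 0 ≤ t / r := div_nonneg ht hrR.le
  have hrC : ((r : ℕ) : ℂ) ≠ 0 := Nat.cast_ne_zero.mpr hr.ne'
  have hpow : Wop (A + B) t = (Wop (A + B) (t / r)) ^ r := by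
    have hsc : ((t : ℝ) : ℂ) • ((-Complex.I) • (A + B)) =
        (r : ℕ) • (((t / r : ℝ) : ℂ) • ((-Complex.I) • (A + B))) := by
      rw [← Nat.cast_smul_eq_nsmul ℂ, smul_smul, smul_smul, smul_smul]
      congr 1
      push_cast
      field_simp
    rw [Wop, Wop, hsc, NormedSpace.exp_nsmul]
  have hV : ‖Wop A (t / r) * Wop B (t / r)‖ ≤ 1 := by
    calc ‖Wop A (t / r) * Wop B (t / r)‖ ≤ ‖Wop A (t / r)‖ * ‖Wop B (t / r)‖ := norm_mul_le _ _
      _ ≤ 1 * 1 := mul_le_mul (norm_Wop_le_one hA _) (norm_Wop_le_one hB _)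
          (norm_nonneg _) zero_le_one
      _ = 1 := one_mul 1
  calc ‖Wop (A + B) t - (Wop A (t / r) * Wop B (t / r)) ^ r‖
      = ‖(Wop (A + B) (t / r)) ^ r - (Wop A (t / r) * Wop B (t / r)) ^ r‖ := by rw [hpow]
    _ ≤ r * ‖Wop (A + B) (t / r) - Wop A (t / r) * Wop B (t / r)‖ :=
        norm_pow_sub_pow_le' (norm_Wop_le_one hH _) hV r
    _ ≤ r * ((t / r) ^ 2 / 2 * ‖A * B - B * A‖) :=
        mul_le_mul_of_nonneg_left (one_step hA hB hτ) hrR.le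
    _ = t ^ 2 / (2 * r) * ‖A * B - B * A‖ := by
        rw [div_pow]
        field_simp

lemma star_Wop {C : E →L[ℂ] E} (hC : IsSelfAdjoint C) (s : ℝ) :
    star (Wop C s) = Wop C (-s) := by
  rw [Wop, Wop, NormedSpace.star_exp]
  congr 1
  rw [star_smul, star_smul, hC.star_eq, smul_smul, smul_smul]
  congr 1
  simp only [Complex.star_def, map_neg, Complex.conj_I, Complex.conj_ofReal]
  push_cast
  ring

end TrotterAux5


/-- First-order Trotter error bound for two Hermitian summands:
`‖e^{−itH} − (e^{−i(t/r)H_A} e^{−i(t/r)H_B})^r‖ ≤ (t²/(2r))·‖[H_A, H_B]‖`. -/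
theorem first_order_trotter_bound
    {E : Type*} [NormedAddCommGroup E] [InnerProductSpace ℂ E] [FiniteDimensional ℂ E]
    (HA HB : E →L[ℂ] E) (hA : IsSelfAdjoint HA) (hB : IsSelfAdjoint HB)
    (t : ℝ) (r : ℕ) (hr : 0 < r) :
    ‖NormedSpace.exp ((-(Complex.I * t)) • (HA + HB)) -
        (NormedSpace.exp ((-(Complex.I * (t / r))) • HA) *
          NormedSpace.exp ((-(Complex.I * (t / r))) • HB)) ^ r‖
      ≤ t ^ 2 / (2 * r) * ‖HA * HB - HB * HA‖ := by
  have hc : ((t / (r : ℝ) : ℝ) : ℂ) = (t : ℂ) / (r : ℂ) := by push_cast; ring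
  rw [← Wop_eq, ← hc, ← Wop_eq, ← Wop_eq]
  rcases le_or_gt 0 t with ht | ht
  · exact trotter_nonneg hA hB hr ht
  · have hstar : star (Wop (HA + HB) t - (Wop HA (t / r) * Wop HB (t / r)) ^ r)
        = Wop (HB + HA) (-t) - (Wop HB ((-t) / r) * Wop HA ((-t) / r)) ^ r := by
      rw [star_sub, star_pow, star_mul, star_Wop hA, star_Wop hB, star_Wop (hA.add hB),
        add_comm HA HB, ← neg_div]
    calc ‖Wop (HA + HB) t - (Wop HA (t / r) * Wop HB (t / r)) ^ r‖
        = ‖star (Wop (HA + HB) t - (Wop HA (t / r) * Wop HB (t / r)) ^ r)‖ :=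
          (norm_star _).symm
      _ = ‖Wop (HB + HA) (-t) - (Wop HB ((-t) / r) * Wop HA ((-t) / r)) ^ r‖ := by
          rw [hstar]
      _ ≤ (-t) ^ 2 / (2 * r) * ‖HB * HA - HA * HB‖ :=
          trotter_nonneg hB hA hr (by linarith)
      _ = t ^ 2 / (2 * r) * ‖HA * HB - HB * HA‖ := by rw [neg_sq, norm_sub_rev]
end
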